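/- arXiv:math/0307312 — 2 statements merged into one kernel-verified Lean document; each statement's English description precedes it below -/
import Mathlib

section
/- If a mapping f : E → F is almost p-summing at a ∈ E, then f is continuous at a. -/
/-! Test the definition on one-element families `(h)`: the weak `ℓ_p` norm of `(h)` is `‖h‖`
by Hahn–Banach, and its Rademacher average is `‖f (a + h) - f a‖` since `r₀ = ±1`. Hence
`‖f (a + h) - f a‖ ≤ C ‖h‖ ^ r` for small `h`, which forces continuity at `a`. -/

open MeasureTheory Filter Finset

/-- The weak ℓ_q norm of a finite family: `sup_{‖φ‖≤1} (∑ |φ x_j|^q)^{1/q}`. -/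
noncomputable def weakNorm {E : Type*} [NormedAddCommGroup E] [NormedSpace ℝ E]
    (q : ℝ) {k : ℕ} (x : Fin k → E) : ℝ :=
  sSup {s : ℝ | ∃ φ : E →L[ℝ] ℝ, ‖φ‖ ≤ 1 ∧ s = (∑ j, |φ (x j)| ^ q) ^ (1 / q)}

/-- The weak ℓ_q norm of a sequence. -/
noncomputable def weakNormSeq {E : Type*} [NormedAddCommGroup E] [NormedSpace ℝ E]
    (q : ℝ) (x : ℕ → E) : ℝ :=
  sSup {s : ℝ | ∃ φ : E →L[ℝ] ℝ, ‖φ‖ ≤ 1 ∧ s = (∑' j, |φ (x j)| ^ q) ^ (1 / q)}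

/-- Unconditionally q-summable sequences: weakly q-summable with weak norms of tails → 0. -/
def UncondSummable {E : Type*} [NormedAddCommGroup E] [NormedSpace ℝ E]
    (q : ℝ) (x : ℕ → E) : Prop :=
  (∀ φ : E →L[ℝ] ℝ, Summable fun j => |φ (x j)| ^ q) ∧
    Tendsto (fun m => weakNormSeq q fun j => x (j + m)) atTop (nhds 0)

/-- The Rademacher functions on [0,1]. -/
noncomputable def rademacher (j : ℕ) (t : ℝ) : ℝ :=
  if Int.fract ((2 : ℝ) ^ j * t) < 1 / 2 then 1 else -1

/-- `(∫_0^1 ‖∑_j r_j(t) y_j‖² dt)^{1/2}` for a finite family `y` in `F`. -/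
noncomputable def radNorm {F : Type*} [NormedAddCommGroup F] [NormedSpace ℝ F]
    {k : ℕ} (y : Fin k → F) : ℝ :=
  (∫ t in (0:ℝ)..1, ‖∑ j : Fin k, rademacher (j : ℕ) t • y j‖ ^ 2) ^ ((1:ℝ) / 2)

/-- `f` is almost p-summing at `a`. -/
def AlmostSummingAt {E F : Type*} [NormedAddCommGroup E] [NormedSpace ℝ E]
    [NormedAddCommGroup F] [NormedSpace ℝ F] (p : ℝ) (f : E → F) (a : E) : Prop :=
  ∃ C > 0, ∃ ε > 0, ∃ r > 0, ∀ (k : ℕ) (x : Fin k → E), weakNorm p x < ε →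
    radNorm (fun j => f (a + x j) - f a) ≤ C * weakNorm p x ^ r

/-- `f` is absolutely (p,q)-summing at `a`. -/
def AbsSummingAt {E F : Type*} [NormedAddCommGroup E] [NormedSpace ℝ E]
    [NormedAddCommGroup F] [NormedSpace ℝ F] (p q : ℝ) (f : E → F) (a : E) : Prop :=
  ∃ M > 0, ∃ δ > 0, ∃ r > 0, ∀ (k : ℕ) (x : Fin k → E), weakNorm q x < δ →
    (∑ j, ‖f (a + x j) - f a‖ ^ p) ≤ M * weakNorm q x ^ r

lemma weakNorm_const_one {E : Type*} [NormedAddCommGroup E] [NormedSpace ℝ E]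
    {q : ℝ} (hq : q ≠ 0) (v : E) : weakNorm q (fun _ : Fin 1 => v) = ‖v‖ := by
  have hterm (φ : E →L[ℝ] ℝ) : (∑ _j : Fin 1, |φ v| ^ q) ^ (1 / q) = |φ v| := by
    rw [Fin.sum_univ_one, ← Real.rpow_mul (abs_nonneg _), mul_one_div_cancel hq,
      Real.rpow_one]
  have hgreatest : IsGreatest {s : ℝ | ∃ φ : E →L[ℝ] ℝ, ‖φ‖ ≤ 1 ∧
      s = (∑ _j : Fin 1, |φ v| ^ q) ^ (1 / q)} ‖v‖ := by
    constructor
    · obtain ⟨g, hg, hgv⟩ := exists_dual_vector'' ℝ v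
      exact ⟨g, hg, by rw [hterm, hgv, RCLike.ofReal_real_eq_id, id, abs_norm]⟩
    · rintro s ⟨φ, hφ, rfl⟩
      rw [hterm]
      exact (φ.le_opNorm v).trans (mul_le_of_le_one_left (norm_nonneg v) hφ)
  exact hgreatest.csSup_eq

lemma radNorm_const_one {F : Type*} [NormedAddCommGroup F] [NormedSpace ℝ F]
    (w : F) : radNorm (fun _ : Fin 1 => w) = ‖w‖ := by
  have hsq (t : ℝ) : ‖∑ j : Fin 1, rademacher (j : ℕ) t • w‖ ^ 2 = ‖w‖ ^ 2 := by
    rw [Fin.sum_univ_one, norm_smul]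
    unfold rademacher
    split <;> simp
  simp only [radNorm, hsq, intervalIntegral.integral_const, sub_zero, one_smul]
  rw [← Real.rpow_natCast, ← Real.rpow_mul (norm_nonneg _)]
  norm_num

lemma AlmostSummingAt.exists_norm_sub_le {E F : Type*} [NormedAddCommGroup E]
    [NormedSpace ℝ E] [NormedAddCommGroup F] [NormedSpace ℝ F] {p : ℝ} (hp : p ≠ 0)
    {f : E → F} {a : E} (hf : AlmostSummingAt p f a) :
    ∃ C, ∃ n > 0, ∀ᶠ x in nhds a, ‖f x - f a‖ ≤ C * ‖x - a‖ ^ n := by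
  obtain ⟨C, -, ε, hε, n, hn, H⟩ := hf
  refine ⟨C, n, hn, ?_⟩
  filter_upwards [Metric.ball_mem_nhds a hε] with x hx
  rw [Metric.mem_ball, dist_eq_norm] at hx
  have hbound := H 1 (fun _ => x - a) (by rwa [weakNorm_const_one hp])
  rwa [weakNorm_const_one hp, add_sub_cancel, radNorm_const_one] at hbound

lemma continuousAt_of_eventually_norm_sub_le_pow {E F : Type*} [SeminormedAddCommGroup E]
    [SeminormedAddCommGroup F] {f : E → F} {a : E} {C : ℝ} {n : ℕ} (hn : n ≠ 0)
    (hf : ∀ᶠ x in nhds a, ‖f x - f a‖ ≤ C * ‖x - a‖ ^ n) : ContinuousAt f a := by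
  have hbound : Tendsto (fun x => C * ‖x - a‖ ^ n) (nhds a) (nhds 0) := by
    simpa [hn] using ((tendsto_norm_sub_self a).pow n).const_mul C
  rw [ContinuousAt, tendsto_iff_norm_sub_tendsto_zero]
  exact squeeze_zero' (Eventually.of_forall fun _ => norm_nonneg _) hf hbound

theorem stmt4 {E F : Type*} [NormedAddCommGroup E] [NormedSpace ℝ E]
    [NormedAddCommGroup F] [NormedSpace ℝ F]
    (p : ℝ) (hp : 1 ≤ p) (f : E → F) (a : E) (hf : AlmostSummingAt p f a) :
    ContinuousAt f a := by
  obtain ⟨C, n, hn, hbound⟩ := hf.exists_norm_sub_le (by positivity)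
  exact continuousAt_of_eventually_norm_sub_le_pow hn.ne' hbound
end

section
/- Let P : E → F be a continuous n-homogeneous polynomial between Banach spaces and let P̌ be its associated symmetric n-linear mapping. Then P is almost p-summing at every point of E if and only if P̌ is almost p-summing at every point of E × ... × E (n copies). -/
open MeasureTheory Filter Finset

/-!
Restricting `P̌` along the diagonal `x ↦ (x, …, x)`, a continuous linear map, shows that `P`
inherits almost summability from `P̌`. Conversely, the polarization formula
`n! P̌(v) = ∑_{t ⊆ {1,…,n}} (-1)^|t| P(∑_{i ∉ t} v_i)` exhibits `P̌` as a finite linear combination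
of `P` composed with continuous linear maps. Being almost `p`-summing at a point is stable under
sums, scalar multiples and precomposition with a continuous linear map `L` (which multiplies weak
`ℓ_p` norms by at most `‖L‖`); only the constants and the exponent change.
-/

section WeakNorm

variable {E G : Type*} [NormedAddCommGroup E] [NormedSpace ℝ E]
  [NormedAddCommGroup G] [NormedSpace ℝ G] {q : ℝ} {k : ℕ}

theorem weakNorm_nonneg (q : ℝ) (x : Fin k → E) : 0 ≤ weakNorm q x :=
  Real.sSup_nonneg <| by
    rintro s ⟨φ, -, rfl⟩
    exact Real.rpow_nonneg (sum_nonneg fun j _ => Real.rpow_nonneg (abs_nonneg _) _) _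

theorem le_weakNorm (hq : 0 ≤ q) (x : Fin k → E) {φ : E →L[ℝ] ℝ} (hφ : ‖φ‖ ≤ 1) :
    (∑ j, |φ (x j)| ^ q) ^ (1 / q) ≤ weakNorm q x := by
  refine le_csSup ⟨(∑ j, ‖x j‖ ^ q) ^ (1 / q), ?_⟩ ⟨φ, hφ, rfl⟩
  rintro s ⟨ψ, hψ, rfl⟩
  have hψx : ∀ j, |ψ (x j)| ≤ ‖x j‖ := fun j =>
    (ψ.le_opNorm (x j)).trans (mul_le_of_le_one_left (norm_nonneg _) hψ)
  gcongr with j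
  exact hψx j

theorem weakNorm_comp_le (hq : 0 < q) (u : E →L[ℝ] G) (x : Fin k → E) :
    weakNorm q (fun j => u (x j)) ≤ ‖u‖ * weakNorm q x := by
  refine Real.sSup_le ?_ (mul_nonneg (norm_nonneg u) (weakNorm_nonneg q x))
  rintro s ⟨φ, hφ, rfl⟩
  rcases (norm_nonneg u).eq_or_lt with hu | hu
  · obtain rfl : u = 0 := norm_eq_zero.mp hu.symm
    simp [Real.zero_rpow hq.ne', Real.zero_rpow (inv_pos.mpr hq).ne']
  set ψ : E →L[ℝ] ℝ := ‖u‖⁻¹ • φ.comp u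
  have hψ : ‖ψ‖ ≤ 1 := by
    calc ‖ψ‖ ≤ ‖u‖⁻¹ * (‖φ‖ * ‖u‖) := by
          rw [norm_smul, norm_inv, norm_norm]; gcongr; exact φ.opNorm_comp_le u
      _ ≤ ‖u‖⁻¹ * (1 * ‖u‖) := by gcongr
      _ = 1 := by field_simp
  have hφψ : ∀ y, |φ (u y)| = ‖u‖ * |ψ y| := fun y => by
    simp [ψ, abs_mul, hu.ne']
  calc (∑ j, |φ (u (x j))| ^ q) ^ (1 / q)
      = (‖u‖ ^ q * ∑ j, |ψ (x j)| ^ q) ^ (1 / q) := by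
        simp only [hφψ, Real.mul_rpow hu.le (abs_nonneg _), mul_sum]
    _ = ‖u‖ * (∑ j, |ψ (x j)| ^ q) ^ (1 / q) := by
        rw [Real.mul_rpow (by positivity) (by positivity), ← Real.rpow_mul hu.le,
          mul_one_div_cancel hq.ne', Real.rpow_one]
    _ ≤ ‖u‖ * weakNorm q x := by gcongr; exact le_weakNorm hq.le x hψ

end WeakNorm

section Rademacher

variable {F : Type*} [NormedAddCommGroup F] [NormedSpace ℝ F] {k : ℕ}

theorem measurable_rademacher (j : ℕ) : Measurable (rademacher j) :=
  Measurable.ite (measurableSet_lt (measurable_fract.comp (measurable_const_mul _))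
    measurable_const) measurable_const measurable_const

theorem abs_rademacher_le_one (j : ℕ) (t : ℝ) : |rademacher j t| ≤ 1 := by
  unfold rademacher; split_ifs <;> norm_num

noncomputable def rademacherSum (y : Fin k → F) (t : ℝ) : F :=
  ∑ j : Fin k, rademacher (j : ℕ) t • y j

theorem rademacherSum_add (y z : Fin k → F) (t : ℝ) :
    rademacherSum (y + z) t = rademacherSum y t + rademacherSum z t := by
  simp [rademacherSum, smul_add, sum_add_distrib]

theorem rademacherSum_smul (c : ℝ) (y : Fin k → F) (t : ℝ) :
    rademacherSum (c • y) t = c • rademacherSum y t := by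
  simp [rademacherSum, smul_sum, smul_comm c]

theorem norm_rademacherSum_le (y : Fin k → F) (t : ℝ) :
    ‖rademacherSum y t‖ ≤ ∑ j, ‖y j‖ := by
  refine (norm_sum_le _ _).trans (sum_le_sum fun j _ => ?_)
  rw [norm_smul, Real.norm_eq_abs]
  exact mul_le_of_le_one_left (norm_nonneg _) (abs_rademacher_le_one _ _)

theorem intervalIntegrable_norm_rademacherSum_sq (y : Fin k → F) :
    IntervalIntegrable (fun t => ‖rademacherSum y t‖ ^ 2) volume 0 1 := by
  have hmeas : StronglyMeasurable (rademacherSum y) :=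
    stronglyMeasurable_fun_sum _ fun j _ =>
      (measurable_rademacher j).stronglyMeasurable.smul_const (y j)
  rw [intervalIntegrable_iff_integrableOn_Ioc_of_le zero_le_one]
  refine Integrable.mono' (g := fun _ => (∑ j, ‖y j‖) ^ 2)
    (integrableOn_const measure_Ioc_lt_top.ne) (hmeas.norm.pow 2).aestronglyMeasurable
    (ae_of_all _ fun t => ?_)
  rw [Real.norm_eq_abs, abs_of_nonneg (by positivity)]
  exact pow_le_pow_left₀ (norm_nonneg _) (norm_rademacherSum_le y t) 2

theorem radNorm_eq_sqrt (y : Fin k → F) :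
    radNorm y = √(∫ t in (0:ℝ)..1, ‖rademacherSum y t‖ ^ 2) :=
  (Real.sqrt_eq_rpow _).symm

theorem radNorm_nonneg (y : Fin k → F) : 0 ≤ radNorm y := by
  rw [radNorm_eq_sqrt]; exact Real.sqrt_nonneg _

theorem radNorm_zero : radNorm (0 : Fin k → F) = 0 := by
  simp [radNorm_eq_sqrt, rademacherSum]

theorem radNorm_smul (c : ℝ) (y : Fin k → F) : radNorm (c • y) = |c| * radNorm y := by
  simp only [radNorm_eq_sqrt, rademacherSum_smul, norm_smul, mul_pow, Real.norm_eq_abs, sq_abs,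
    intervalIntegral.integral_const_mul, Real.sqrt_mul (sq_nonneg c), Real.sqrt_sq_eq_abs]

theorem radNorm_add_le (y z : Fin k → F) : radNorm (y + z) ≤ 2 * (radNorm y + radNorm z) := by
  set I : (Fin k → F) → ℝ := fun y => ∫ t in (0:ℝ)..1, ‖rademacherSum y t‖ ^ 2
  have hI : ∀ y, 0 ≤ I y := fun y =>
    intervalIntegral.integral_nonneg zero_le_one fun t _ => by positivity
  have hyz : I (y + z) ≤ 2 * I y + 2 * I z := by
    rw [← intervalIntegral.integral_const_mul, ← intervalIntegral.integral_const_mul,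
      ← intervalIntegral.integral_add]
    · refine intervalIntegral.integral_mono_on zero_le_one
        (intervalIntegrable_norm_rademacherSum_sq _) ?_ fun t _ => ?_
      · exact ((intervalIntegrable_norm_rademacherSum_sq y).const_mul 2).add
          ((intervalIntegrable_norm_rademacherSum_sq z).const_mul 2)
      rw [rademacherSum_add]
      calc ‖rademacherSum y t + rademacherSum z t‖ ^ 2
          ≤ (‖rademacherSum y t‖ + ‖rademacherSum z t‖) ^ 2 := by gcongr; exact norm_add_le _ _
        _ ≤ _ := by linarith [add_sq_le (a := ‖rademacherSum y t‖) (b := ‖rademacherSum z t‖)]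
    · exact (intervalIntegrable_norm_rademacherSum_sq y).const_mul 2
    · exact (intervalIntegrable_norm_rademacherSum_sq z).const_mul 2
  simp only [radNorm_eq_sqrt]
  refine (Real.sqrt_le_sqrt hyz).trans (Real.sqrt_le_iff.mpr ⟨by positivity, ?_⟩)
  nlinarith [Real.sq_sqrt (hI y), Real.sq_sqrt (hI z), Real.sqrt_nonneg (I y),
    Real.sqrt_nonneg (I z)]

end Rademacher

namespace AlmostSummingAt

variable {E G F : Type*} [NormedAddCommGroup E] [NormedSpace ℝ E]
  [NormedAddCommGroup G] [NormedSpace ℝ G] [NormedAddCommGroup F] [NormedSpace ℝ F]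
  {p : ℝ} {f g : E → F} {a : E}

theorem zero : AlmostSummingAt p (0 : E → F) a :=
  ⟨1, one_pos, 1, one_pos, 1, one_pos, fun k x _ => by
    simpa [← Pi.zero_def, radNorm_zero] using weakNorm_nonneg p x⟩

theorem add (hf : AlmostSummingAt p f a) (hg : AlmostSummingAt p g a) :
    AlmostSummingAt p (f + g) a := by
  obtain ⟨C₁, hC₁, ε₁, hε₁, r₁, hr₁, hf⟩ := hf
  obtain ⟨C₂, hC₂, ε₂, hε₂, r₂, hr₂, hg⟩ := hg
  refine ⟨2 * (C₁ + C₂), by positivity, min 1 (min ε₁ ε₂), by positivity, min r₁ r₂,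
    lt_min hr₁ hr₂, fun k x hx => ?_⟩
  set w := weakNorm p x
  have hw0 : 0 ≤ w := weakNorm_nonneg p x
  have hw1 : w ≤ 1 := hx.le.trans (min_le_left _ _)
  have hwε₁ : w < ε₁ := hx.trans_le ((min_le_right _ _).trans (min_le_left _ _))
  have hwε₂ : w < ε₂ := hx.trans_le ((min_le_right _ _).trans (min_le_right _ _))
  calc radNorm (fun j => (f + g) (a + x j) - (f + g) a)
      = radNorm ((fun j => f (a + x j) - f a) + fun j => g (a + x j) - g a) := by
        congr 1; ext j; simp only [Pi.add_apply]; abel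
    _ ≤ 2 * (C₁ * w ^ r₁ + C₂ * w ^ r₂) := by
        refine (radNorm_add_le _ _).trans ?_
        gcongr
        exacts [hf k x hwε₁, hg k x hwε₂]
    _ ≤ 2 * (C₁ * w ^ min r₁ r₂ + C₂ * w ^ min r₁ r₂) := by
        gcongr 2 * (C₁ * ?_ + C₂ * ?_)
        exacts [pow_le_pow_of_le_one hw0 hw1 (min_le_left _ _),
          pow_le_pow_of_le_one hw0 hw1 (min_le_right _ _)]
    _ = 2 * (C₁ + C₂) * w ^ min r₁ r₂ := by ring

theorem const_smul (hf : AlmostSummingAt p f a) (c : ℝ) : AlmostSummingAt p (c • f) a := by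
  obtain ⟨C, hC, ε, hε, r, hr, hf⟩ := hf
  refine ⟨(|c| + 1) * C, by positivity, ε, hε, r, hr, fun k x hx => ?_⟩
  calc radNorm (fun j => (c • f) (a + x j) - (c • f) a)
      = |c| * radNorm (fun j => f (a + x j) - f a) := by
        rw [← radNorm_smul]; congr 1; ext j; simp [smul_sub]
    _ ≤ (|c| + 1) * (C * weakNorm p x ^ r) :=
        mul_le_mul (by linarith) (hf k x hx) (radNorm_nonneg _) (by positivity)
    _ = (|c| + 1) * C * weakNorm p x ^ r := by ring

theorem sum {ι : Type*} {s : Finset ι} {f : ι → E → F}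
    (hf : ∀ i ∈ s, AlmostSummingAt p (f i) a) : AlmostSummingAt p (∑ i ∈ s, f i) a :=
  Finset.sum_induction f (AlmostSummingAt p · a) (fun _ _ => add) zero hf

theorem comp_continuousLinearMap (hp : 0 < p) {f : G → F} {L : E →L[ℝ] G}
    (hf : AlmostSummingAt p f (L a)) : AlmostSummingAt p (f ∘ L) a := by
  obtain ⟨C, hC, ε, hε, r, hr, hf⟩ := hf
  refine ⟨C * (‖L‖ + 1) ^ r, by positivity, ε / (‖L‖ + 1), by positivity, r, hr,
    fun k x hx => ?_⟩
  have hLx : weakNorm p (fun j => L (x j)) ≤ (‖L‖ + 1) * weakNorm p x :=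
    (weakNorm_comp_le hp L x).trans
      (mul_le_mul_of_nonneg_right (by linarith) (weakNorm_nonneg p x))
  have hLxε : weakNorm p (fun j => L (x j)) < ε :=
    hLx.trans_lt (by rwa [lt_div_iff₀' (by positivity)] at hx)
  calc radNorm (fun j => (f ∘ L) (a + x j) - (f ∘ L) a)
      = radNorm (fun j => f (L a + L (x j)) - f (L a)) := by simp only [Function.comp, map_add]
    _ ≤ C * weakNorm p (fun j => L (x j)) ^ r := hf k _ hLxε
    _ ≤ C * ((‖L‖ + 1) * weakNorm p x) ^ r := by
        gcongr
        exact weakNorm_nonneg p _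
    _ = C * (‖L‖ + 1) ^ r * weakNorm p x ^ r := by rw [mul_pow, mul_assoc]

end AlmostSummingAt

theorem Finset.mem_inf_iff_forall {α ι : Type*} [DecidableEq α] [Fintype α] {s : Finset ι}
    {f : ι → Finset α} {a : α} : a ∈ s.inf f ↔ ∀ i ∈ s, a ∈ f i := by
  simpa only [singleton_subset_iff] using
    Finset.le_inf_iff (a := ({a} : Finset α)) (s := s) (f := f)

theorem Finset.sum_surjective_eq_sum_perm {α M : Type*} [Fintype α] [DecidableEq α]
    [AddCommMonoid M] (g : (α → α) → M) :
    ∑ r with Function.Surjective r, g r = ∑ σ : Equiv.Perm α, g σ := by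
  refine (sum_bij (fun (σ : Equiv.Perm α) _ => ⇑σ) (fun σ _ => by simpa using σ.surjective)
    (fun _ _ _ _ h => Equiv.ext (congrFun h)) (fun r hr => ?_) (fun _ _ => rfl)).symm
  have hr : Function.Surjective r := (mem_filter.mp hr).2
  exact ⟨Equiv.ofBijective r ⟨Finite.injective_iff_surjective.mpr hr, hr⟩, mem_univ _, rfl⟩

theorem MultilinearMap.factorial_smul_eq_sum_neg_one_pow {R M N : Type*} [CommSemiring R]
    [AddCommMonoid M] [Module R M] [AddCommGroup N] [Module R N] {n : ℕ}
    (f : MultilinearMap R (fun _ : Fin n => M) N)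
    (hf : ∀ (σ : Equiv.Perm (Fin n)) (v : Fin n → M), f (v ∘ σ) = f v) (v : Fin n → M) :
    n.factorial • f v = ∑ t : Finset (Fin n), (-1 : ℤ) ^ #t • f (fun _ => ∑ i ∈ tᶜ, v i) := by
  classical
  have hmiss : ∀ t : Finset (Fin n),
      t.inf (fun i => univ.filter fun r : Fin n → Fin n => ∀ j, r j ≠ i)
        = Fintype.piFinset fun _ => tᶜ := by
    intro t; ext r
    simp only [ne_eq, mem_inf_iff_forall, mem_filter, mem_univ, true_and, Fintype.mem_piFinset,
      mem_compl]
    exact ⟨fun h j hj => h _ hj j rfl, fun h i hi j hj => h j (hj ▸ hi)⟩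
  have hsurj : (univ.inf fun i => (univ.filter fun r : Fin n → Fin n => ∀ j, r j ≠ i)ᶜ)
      = univ.filter Function.Surjective := by
    ext r; simp [Finset.mem_inf_iff_forall, Function.Surjective]
  -- inclusion–exclusion over the sets of maps missing a given value leaves the surjective maps
  have := inclusion_exclusion_sum_inf_compl univ
    (fun i => univ.filter fun r : Fin n → Fin n => ∀ j, r j ≠ i) (fun r => f (v ∘ r))
  rw [hsurj, sum_surjective_eq_sum_perm] at this
  simp only [hf, sum_const, card_univ, Fintype.card_perm, Fintype.card_fin, hmiss] at this
  rw [this]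
  refine sum_congr rfl fun t _ => ?_
  rw [f.map_sum_finset]
  rfl

theorem ContinuousMultilinearMap.eq_sum_smul_apply_diag {E F : Type*} [NormedAddCommGroup E]
    [NormedSpace ℝ E] [NormedAddCommGroup F] [NormedSpace ℝ F] {n : ℕ}
    (T : ContinuousMultilinearMap ℝ (fun _ : Fin n => E) F)
    (hsym : ∀ (σ : Equiv.Perm (Fin n)) (v : Fin n → E), T (v ∘ σ) = T v) (v : Fin n → E) :
    T v = ∑ t : Finset (Fin n),
      ((-1 : ℝ) ^ #t / n.factorial) • T (fun _ => ∑ i ∈ tᶜ, v i) := by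
  have hn : (n.factorial : ℝ) ≠ 0 := by positivity
  have h := T.toMultilinearMap.factorial_smul_eq_sum_neg_one_pow hsym v
  simp only [ContinuousMultilinearMap.coe_coe] at h
  calc T v = (n.factorial : ℝ)⁻¹ • n.factorial • T v := by
        rw [← Nat.cast_smul_eq_nsmul ℝ, inv_smul_smul₀ hn]
    _ = _ := by
        rw [h, smul_sum]
        refine sum_congr rfl fun t _ => ?_
        rw [← Int.cast_smul_eq_zsmul ℝ, smul_smul, div_eq_inv_mul]
        push_cast
        rfl

theorem stmt9 {E F : Type*} [NormedAddCommGroup E] [NormedSpace ℝ E]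
    [NormedAddCommGroup F] [NormedSpace ℝ F]
    (p : ℝ) (hp : 1 ≤ p) (n : ℕ)
    (T : ContinuousMultilinearMap ℝ (fun _ : Fin n => E) F)
    (hsym : ∀ (σ : Equiv.Perm (Fin n)) (v : Fin n → E), T (v ∘ σ) = T v) :
    (∀ a : E, AlmostSummingAt p (fun x => T fun _ => x) a) ↔
      (∀ a : Fin n → E, AlmostSummingAt p (fun v => T v) a) := by
  have hp0 : 0 < p := by linarith
  constructor
  · intro hP a
    have hT : (fun v => T v) = ∑ t : Finset (Fin n), ((-1 : ℝ) ^ #t / n.factorial) •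
        ((fun x => T fun _ => x) ∘
          ⇑(∑ i ∈ tᶜ, ContinuousLinearMap.proj (R := ℝ) (φ := fun _ => E) i)) := by
      ext v
      simp [T.eq_sum_smul_apply_diag hsym v]
    rw [hT]
    exact AlmostSummingAt.sum fun t _ =>
      (AlmostSummingAt.comp_continuousLinearMap hp0 (hP _)).const_smul _
  · intro hT a
    let diag : E →L[ℝ] Fin n → E := ContinuousLinearMap.pi fun _ => ContinuousLinearMap.id ℝ E
    exact (hT (diag a)).comp_continuousLinearMap hp0
end
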